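/- Let 0 < m < m_T. Then the wavelike parametrization γ_w(·|m) is injective on all of ℝ; in particular it has no self-intersection. -/

import Mathlib

open Real MeasureTheory Set

noncomputable section

abbrev E2 := EuclideanSpace ℝ (Fin 2)

/-- The point of the Euclidean plane with coordinates `(a, b)`. -/
def mkE2 (a b : ℝ) : E2 := WithLp.toLp 2 ![a, b]
/-- Incomplete elliptic integral of the first kind `F(x,m)`. -/
def Fell (x m : ℝ) : ℝ := ∫ θ in (0:ℝ)..x, 1 / Real.sqrt (1 - m * Real.sin θ ^ 2)

/-- Incomplete elliptic integral of the second kind `E(x,m)`. -/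
def Eell (x m : ℝ) : ℝ := ∫ θ in (0:ℝ)..x, Real.sqrt (1 - m * Real.sin θ ^ 2)

/-- Complete elliptic integral of the first kind `K(m)`. -/
def Kc (m : ℝ) : ℝ := Fell (Real.pi / 2) m

/-- Complete elliptic integral of the second kind `E(m)`. -/
def Ec (m : ℝ) : ℝ := Eell (Real.pi / 2) m

/-- `α(m) = arcsin √(1/(2m))`. -/
def alph (m : ℝ) : ℝ := Real.arcsin (Real.sqrt (1 / (2 * m)))

/-- `G(x,m) = ∫₀ˣ (1 − 2m sin²θ)(1 − m sin²θ)^{−1/2} dθ = 2E(x,m) − F(x,m)`. -/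
def Gw (x m : ℝ) : ℝ :=
  ∫ θ in (0:ℝ)..x, (1 - 2 * m * Real.sin θ ^ 2) / Real.sqrt (1 - m * Real.sin θ ^ 2)

/-- `f(m) = ∫₀^{π−α(m)} (1 − 2m sin²θ)(1 − m sin²θ)^{−1/2} dθ`; its unique zero is `m_T`. -/
def fT (m : ℝ) : ℝ := Gw (Real.pi - alph m) m
/-- The wavelike parametrization `γ_w(x|m) = (G(x,m), −2√m cos x)`. -/
def gammaW (m : ℝ) : ℝ → E2 := fun x => mkE2 (Gw x m) (-2 * Real.sqrt m * Real.cos x)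

/-!
The integrand `g` of `G` is even and `π`-periodic, so `G` is odd and
`G(x + kπ) = G(x) + k G(π)`. Since `cos x = cos y` forces `y = 2kπ ± x`, injectivity of `γ_w`
reduces to positivity of `G` on `(0, ∞)`, and by periodicity to positivity on `(0, π]`.
For `m < 1/2` the integrand is positive. For `m ≥ 1/2` it is positive on `[0, α(m))`,
nonpositive on `[α(m), π - α(m)]` and nonnegative on `[π - α(m), π]`, so `G` is positive on
`(0, α(m)]` and bounded below by `f(m)` on `[α(m), π]`. Finally `f(m) > f(m_T) = 0`: the
integrand strictly decreases in `m`, and the extra range `[π - α(m), π - α(m_T)]` of `f(m_T)`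
lies where the integrand for `m_T` is nonpositive.
-/

theorem intervalIntegral_nonpos {f : ℝ → ℝ} {a b : ℝ} (hab : a ≤ b)
    (hf : ∀ x ∈ Icc a b, f x ≤ 0) : ∫ x in a..b, f x ≤ 0 := by
  simpa using intervalIntegral.integral_nonneg hab fun x hx => neg_nonneg.mpr (hf x hx)

section PeriodicPrimitive

variable {g : ℝ → ℝ} {T : ℝ}

theorem intervalIntegral_zero_neg_of_even (hg : ∀ x, g (-x) = g x) (x : ℝ) :
    ∫ θ in (0:ℝ)..-x, g θ = -∫ θ in (0:ℝ)..x, g θ := by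
  rw [← intervalIntegral.integral_symm, ← neg_zero, ← intervalIntegral.integral_comp_neg]
  simp only [hg, neg_zero]

theorem Function.Periodic.intervalIntegral_zero_add_zsmul (hg : Function.Periodic g T)
    (hint : ∀ a b, IntervalIntegrable g volume a b) (x : ℝ) (k : ℤ) :
    ∫ θ in (0:ℝ)..x + k • T, g θ = (∫ θ in (0:ℝ)..x, g θ) + k • ∫ θ in (0:ℝ)..T, g θ := by
  rw [← intervalIntegral.integral_add_adjacent_intervals (hint 0 x) (hint x _),
    hg.intervalIntegral_add_zsmul_eq k x hint, hg.intervalIntegral_add_eq x 0, zero_add]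

theorem Function.Periodic.intervalIntegral_zero_pos (hg : Function.Periodic g T)
    (hint : ∀ a b, IntervalIntegrable g volume a b) (hT : 0 < T)
    (hpos : ∀ t ∈ Ioc 0 T, 0 < ∫ θ in (0:ℝ)..t, g θ) {t : ℝ} (ht : 0 < t) :
    0 < ∫ θ in (0:ℝ)..t, g θ := by
  set n := toIocDiv hT 0 t
  have hr : toIocMod hT 0 t ∈ Ioc 0 T := by simpa using toIocMod_mem_Ioc hT 0 t
  have ht_eq : toIocMod hT 0 t + n • T = t := by
    rw [add_comm]; exact toIocDiv_zsmul_sub_toIocMod hT 0 t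
  have hn : 0 ≤ n := by
    have : (-1 : ℝ) * T < n * T := by rw [← zsmul_eq_mul]; linarith [hr.2]
    have : (-1 : ℤ) < n := by exact_mod_cast lt_of_mul_lt_mul_right this hT.le
    omega
  rw [← ht_eq, hg.intervalIntegral_zero_add_zsmul hint]
  exact add_pos_of_pos_of_nonneg (hpos _ hr) (zsmul_nonneg (hpos T ⟨hT, le_rfl⟩).le hn)

end PeriodicPrimitive

theorem eq_of_intervalIntegral_eq_of_cos_eq {g : ℝ → ℝ} (heven : ∀ x, g (-x) = g x)
    (hper : Function.Periodic g π) (hint : ∀ a b, IntervalIntegrable g volume a b)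
    (hpos : ∀ t, 0 < t → 0 < ∫ θ in (0:ℝ)..t, g θ) {x y : ℝ}
    (hG : ∫ θ in (0:ℝ)..x, g θ = ∫ θ in (0:ℝ)..y, g θ) (hcos : cos x = cos y) : x = y := by
  set G : ℝ → ℝ := fun x => ∫ θ in (0:ℝ)..x, g θ
  change G x = G y at hG
  have hshift (x : ℝ) (k : ℤ) : G (x + k * π) = G x + k * G π := by
    simpa only [zsmul_eq_mul] using hper.intervalIntegral_zero_add_zsmul hint x k
  have hodd (x : ℝ) : G (-x) = -G x := intervalIntegral_zero_neg_of_even heven x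
  have hGπ : 0 < G π := hpos π pi_pos
  have hzero (t : ℝ) (ht : G t = 0) : t = 0 := by
    rcases lt_trichotomy t 0 with h | h | h
    · linarith [hodd t, hpos (-t) (neg_pos.mpr h)]
    · exact h
    · linarith [hpos t h]
  obtain ⟨k, hy | hy⟩ := cos_eq_cos_iff.mp hcos
  · have hGy : G y = G x + (2 * k : ℤ) * G π := by
      rw [← hshift, hy]; push_cast; ring_nf
    have hk : ((2 * k : ℤ) : ℝ) = 0 := by
      have : ((2 * k : ℤ) : ℝ) * G π = 0 := by linarith
      exact (mul_eq_zero.mp this).resolve_right hGπ.ne'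
    have hk0 : (k : ℝ) = 0 := by push_cast at hk; linarith
    rw [hy, hk0]; ring
  · have hGy : G y = -G x + (2 * k : ℤ) * G π := by
      rw [← hodd, ← hshift, hy]; push_cast; ring_nf
    have hx : x + (-k : ℤ) * π = 0 := by
      apply hzero
      rw [hshift]; push_cast at hGy ⊢; linarith
    push_cast at hx
    rw [hy]; linarith

def gwIntegrand (m θ : ℝ) : ℝ := (1 - 2 * m * sin θ ^ 2) / √(1 - m * sin θ ^ 2)

theorem Gw_eq_intervalIntegral (x m : ℝ) : Gw x m = ∫ θ in (0:ℝ)..x, gwIntegrand m θ := rfl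

section Integrand

variable {m m' θ : ℝ}

theorem mul_sin_sq_lt {c : ℝ} (hm : m < c) (hc : 0 < c) (θ : ℝ) : m * sin θ ^ 2 < c := by
  rcases le_or_gt m 0 with hm0 | hm0
  · nlinarith [sq_nonneg (sin θ)]
  · nlinarith [sin_sq_le_one θ]

theorem one_sub_mul_sin_sq_pos (hm : m < 1) (θ : ℝ) : 0 < 1 - m * sin θ ^ 2 :=
  sub_pos.mpr (mul_sin_sq_lt hm one_pos θ)

theorem continuous_gwIntegrand (hm : m < 1) : Continuous (gwIntegrand m) :=
  .div (by fun_prop) (by fun_prop) fun θ => (sqrt_pos.mpr (one_sub_mul_sin_sq_pos hm θ)).ne'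

theorem intervalIntegrable_gwIntegrand (hm : m < 1) (a b : ℝ) :
    IntervalIntegrable (gwIntegrand m) volume a b :=
  (continuous_gwIntegrand hm).intervalIntegrable a b

theorem gwIntegrand_periodic (m : ℝ) : Function.Periodic (gwIntegrand m) π := by
  intro θ; simp only [gwIntegrand, sin_add_pi, neg_sq]

theorem gwIntegrand_neg (m θ : ℝ) : gwIntegrand m (-θ) = gwIntegrand m θ := by
  simp only [gwIntegrand, sin_neg, neg_sq]

theorem gwIntegrand_pos (h : m * sin θ ^ 2 < 1 / 2) : 0 < gwIntegrand m θ :=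
  div_pos (by linarith) (sqrt_pos.mpr (by linarith))

theorem gwIntegrand_nonneg (h : m * sin θ ^ 2 ≤ 1 / 2) : 0 ≤ gwIntegrand m θ :=
  div_nonneg (by linarith) (sqrt_nonneg _)

theorem gwIntegrand_nonpos (h : 1 / 2 ≤ m * sin θ ^ 2) : gwIntegrand m θ ≤ 0 :=
  div_nonpos_of_nonpos_of_nonneg (by linarith) (sqrt_nonneg _)

/-- With `u = 1 - m sin² θ` the integrand is `2√u - 1/√u`, increasing in `u`. -/
theorem gwIntegrand_lt_of_lt (hmm' : m < m') (hm' : m' < 1) (hθ : sin θ ≠ 0) :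
    gwIntegrand m' θ < gwIntegrand m θ := by
  have key (μ : ℝ) (hμ : μ < 1) :
      gwIntegrand μ θ = 2 * √(1 - μ * sin θ ^ 2) - (√(1 - μ * sin θ ^ 2))⁻¹ := by
    have hu := sqrt_pos.mpr (one_sub_mul_sin_sq_pos hμ θ)
    rw [gwIntegrand, div_eq_iff hu.ne', sub_mul, inv_mul_cancel₀ hu.ne']
    linear_combination (-2) * mul_self_sqrt (one_sub_mul_sin_sq_pos hμ θ).le
  have hu' := one_sub_mul_sin_sq_pos hm' θ
  have huu' : 1 - m' * sin θ ^ 2 < 1 - m * sin θ ^ 2 := by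
    have := pow_pos (sq_pos_of_ne_zero hθ) 1
    nlinarith
  have hsqrt := sqrt_lt_sqrt hu'.le huu'
  have hinv := inv_strictAntiOn (sqrt_pos.mpr hu') (sqrt_pos.mpr (hu'.trans huu')) hsqrt
  rw [key m' hm', key m (hmm'.trans hm')]
  simp only at hinv
  linarith

end Integrand

section Alph

variable {m m' θ : ℝ}

theorem mul_sin_alph_sq (hm : 1 / 2 ≤ m) : m * sin (alph m) ^ 2 = 1 / 2 := by
  have hsqrt : √(1 / (2 * m)) ≤ 1 := sqrt_le_one.mpr ((div_le_one (by linarith)).mpr (by linarith))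
  rw [alph, sin_arcsin (by linarith [sqrt_nonneg (1 / (2 * m))]) hsqrt,
    sq_sqrt (by positivity)]
  field_simp

theorem alph_pos (hm : 0 < m) : 0 < alph m :=
  arcsin_pos.mpr (sqrt_pos.mpr (by positivity))

theorem alph_le_pi_div_two (m : ℝ) : alph m ≤ π / 2 := arcsin_le_pi_div_two _

theorem alph_anti (hm : 0 < m) (hmm' : m ≤ m') : alph m' ≤ alph m :=
  monotone_arcsin (sqrt_le_sqrt (one_div_le_one_div_of_le (by positivity) (by linarith)))

theorem mul_sin_sq_lt_half (hm : 1 / 2 ≤ m) (h0 : 0 ≤ θ) (h : θ < alph m) :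
    m * sin θ ^ 2 < 1 / 2 := by
  have hA := alph_le_pi_div_two m
  have hsin : sin θ < sin (alph m) :=
    strictMonoOn_sin ⟨by linarith [pi_pos], by linarith⟩ ⟨by linarith [pi_pos], hA⟩ h
  have hs : 0 ≤ sin θ := sin_nonneg_of_nonneg_of_le_pi h0 (by linarith [pi_pos])
  rw [← mul_sin_alph_sq hm]
  exact mul_lt_mul_of_pos_left (pow_lt_pow_left₀ hsin hs two_ne_zero) (by linarith)

theorem half_le_mul_sin_sq (hm : 1 / 2 ≤ m) (h1 : alph m ≤ θ) (h2 : θ ≤ π - alph m) :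
    1 / 2 ≤ m * sin θ ^ 2 := by
  have hA0 := alph_pos (by linarith : 0 < m)
  have hA := alph_le_pi_div_two m
  have hsin : sin (alph m) ≤ sin θ := by
    rcases le_total θ (π / 2) with h | h
    · exact strictMonoOn_sin.monotoneOn ⟨by linarith, hA⟩ ⟨by linarith, h⟩ h1
    · rw [← sin_pi_sub θ]
      exact strictMonoOn_sin.monotoneOn ⟨by linarith, hA⟩ ⟨by linarith, by linarith⟩
        (by linarith)
  have hs : 0 ≤ sin (alph m) := sin_nonneg_of_nonneg_of_le_pi hA0.le (by linarith [pi_pos])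
  rw [← mul_sin_alph_sq hm]
  exact mul_le_mul_of_nonneg_left (pow_le_pow_left₀ hs hsin 2) (by linarith)

theorem mul_sin_sq_le_half (hm : 1 / 2 ≤ m) (h1 : π - alph m ≤ θ) (h2 : θ ≤ π) :
    m * sin θ ^ 2 ≤ 1 / 2 := by
  have hA := alph_le_pi_div_two m
  have hsin : sin θ ≤ sin (alph m) := by
    rw [← sin_pi_sub θ]
    exact strictMonoOn_sin.monotoneOn ⟨by linarith [pi_pos], by linarith⟩
      ⟨by linarith [pi_pos], hA⟩ (by linarith)
  have hs : 0 ≤ sin θ := sin_nonneg_of_nonneg_of_le_pi (by linarith [pi_pos]) h2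
  rw [← mul_sin_alph_sq hm]
  exact mul_le_mul_of_nonneg_left (pow_le_pow_left₀ hs hsin 2) (by linarith)

end Alph

section Primitive

variable {m m' mT t : ℝ}

theorem Gw_sub_Gw (hm : m < 1) (a b : ℝ) :
    Gw b m - Gw a m = ∫ θ in a..b, gwIntegrand m θ :=
  intervalIntegral.integral_interval_sub_left (intervalIntegrable_gwIntegrand hm 0 b)
    (intervalIntegrable_gwIntegrand hm 0 a)

theorem Gw_lt_Gw_of_lt (hmm' : m < m') (hm' : m' < 1) (ht : 0 < t) (htπ : t ≤ π) :
    Gw t m' < Gw t m := by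
  rw [← sub_pos, Gw_eq_intervalIntegral, Gw_eq_intervalIntegral,
    ← intervalIntegral.integral_sub (intervalIntegrable_gwIntegrand (hmm'.trans hm') 0 t)
      (intervalIntegrable_gwIntegrand hm' 0 t)]
  refine intervalIntegral.intervalIntegral_pos_of_pos_on
    ((intervalIntegrable_gwIntegrand (hmm'.trans hm') 0 t).sub
      (intervalIntegrable_gwIntegrand hm' 0 t)) (fun θ hθ => ?_) ht
  exact sub_pos.mpr
    (gwIntegrand_lt_of_lt hmm' hm' (sin_pos_of_pos_of_lt_pi hθ.1 (hθ.2.trans_le htπ)).ne')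

theorem fT_pos (hm : 1 / 2 ≤ m) (hmmT : m < mT) (hmT : mT < 1) (hfT : fT mT = 0) :
    0 < fT m := by
  have hA := alph_le_pi_div_two m
  have hBA := alph_anti (by linarith : 0 < m) hmmT.le
  have htail : ∫ θ in (π - alph m)..(π - alph mT), gwIntegrand mT θ ≤ 0 :=
    intervalIntegral_nonpos (by linarith) fun θ hθ =>
      gwIntegrand_nonpos (half_le_mul_sin_sq (by linarith) (by linarith [hθ.1]) hθ.2)
  have hlt : Gw (π - alph m) mT < Gw (π - alph m) m :=
    Gw_lt_Gw_of_lt hmmT hmT (by linarith [pi_pos]) (by linarith [alph_pos (by linarith : 0 < m)])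
  have hsub := Gw_sub_Gw hmT (π - alph m) (π - alph mT)
  rw [fT] at hfT ⊢
  linarith

theorem Gw_pos_of_lt_half (hm : m < 1 / 2) (ht : 0 < t) : 0 < Gw t m :=
  intervalIntegral.intervalIntegral_pos_of_pos_on
    (intervalIntegrable_gwIntegrand (by linarith) 0 t)
    (fun θ _ => gwIntegrand_pos (mul_sin_sq_lt hm one_half_pos θ)) ht

theorem Gw_pos_of_fT_pos (hm : 1 / 2 ≤ m) (hm1 : m < 1) (hf : 0 < fT m) (ht : t ∈ Ioc 0 π) :
    0 < Gw t m := by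
  have hA0 := alph_pos (by linarith : 0 < m)
  rw [fT] at hf
  rcases le_or_gt t (alph m) with h1 | h1
  · exact intervalIntegral.intervalIntegral_pos_of_pos_on
      (intervalIntegrable_gwIntegrand hm1 0 t)
      (fun θ hθ => gwIntegrand_pos (mul_sin_sq_lt_half hm hθ.1.le (hθ.2.trans_le h1))) ht.1
  have hsub := Gw_sub_Gw hm1 t (π - alph m)
  rcases le_or_gt t (π - alph m) with h2 | h2
  · have : ∫ θ in t..(π - alph m), gwIntegrand m θ ≤ 0 :=
      intervalIntegral_nonpos h2 fun θ hθ =>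
        gwIntegrand_nonpos (half_le_mul_sin_sq hm (by linarith [hθ.1]) hθ.2)
    linarith
  · have : ∫ θ in (π - alph m)..t, gwIntegrand m θ ≥ 0 :=
      intervalIntegral.integral_nonneg h2.le fun θ hθ =>
        gwIntegrand_nonneg (mul_sin_sq_le_half hm hθ.1 (hθ.2.trans ht.2))
    rw [intervalIntegral.integral_symm] at hsub
    linarith

theorem Gw_pos (hmT : mT < 1) (hfT : fT mT = 0) (hm : m < mT) (ht : 0 < t) : 0 < Gw t m := by
  rcases lt_or_ge m (1 / 2) with hm2 | hm2
  · exact Gw_pos_of_lt_half hm2 ht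
  · exact (gwIntegrand_periodic m).intervalIntegral_zero_pos
      (intervalIntegrable_gwIntegrand (hm.trans hmT)) pi_pos
      (fun _ hs => Gw_pos_of_fT_pos hm2 (hm.trans hmT) (fT_pos hm2 hm hmT hfT) hs) ht

end Primitive

/-- Lemma 2.18: for `0 < m < m_T`, the wavelike parametrization
`γ_w(·|m)` is injective on all of `ℝ`; in particular it has no self-intersection. -/
theorem stmt11 (mT : ℝ) (hmT : mT ∈ Set.Ioo (1/2 : ℝ) 1) (hmTzero : fT mT = 0)
    (m : ℝ) (hm0 : 0 < m) (hm1 : m < mT) :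
    Function.Injective (gammaW m) := by
  intro x y hxy
  have hG : Gw x m = Gw y m := congrArg (· 0) hxy
  have hcos : cos x = cos y := by
    have h : -2 * √m * cos x = -2 * √m * cos y := congrArg (· 1) hxy
    exact mul_left_cancel₀ (by simp [sqrt_ne_zero', hm0]) h
  exact eq_of_intervalIntegral_eq_of_cos_eq (gwIntegrand_neg m) (gwIntegrand_periodic m)
    (intervalIntegrable_gwIntegrand (hm1.trans hmT.2)) (fun _ => Gw_pos hmT.2 hmTzero hm1) hG hcos
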